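/- arXiv:1911.05272 — 2 statements merged into one kernel-verified Lean document; each statement's English description precedes it below -/
import Mathlib

section
/- For every real number a, the integral ∫₀^∞ x² · erf(a x / √2) · exp(-x²/2) dx equals √(2/π) · ( a/(a² + 1) + arctan(a) ). -/
/-! Differentiate under the integral sign in `a`. The `a`-derivative of the integrand is
`√(2/π) x³ exp (-(a² + 1) x² / 2)`, whose integral over `(0, ∞)` is the Gamma-type moment
`√(2/π) · 2 / (a² + 1)²`; this is also the derivative of `√(2/π) (a / (a² + 1) + arctan a)`.
Both sides vanish at `a = 0`, since `erf 0 = 0`. -/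

open Real MeasureTheory Set Filter

noncomputable def erf (z : ℝ) : ℝ := 2 / Real.sqrt π * ∫ u in (0:ℝ)..z, Real.exp (-u ^ 2)

theorem hasDerivAt_erf (z : ℝ) : HasDerivAt erf (2 / √π * exp (-z ^ 2)) z := by
  have hc : Continuous fun u : ℝ => exp (-u ^ 2) := by fun_prop
  exact (intervalIntegral.integral_hasDerivAt_right (hc.intervalIntegrable 0 z)
    (hc.stronglyMeasurableAtFilter _ _) hc.continuousAt).const_mul _

@[fun_prop]
theorem continuous_erf : Continuous erf :=
  continuous_iff_continuousAt.2 fun z => (hasDerivAt_erf z).continuousAt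

theorem erf_zero : erf 0 = 0 := by
  simp [erf]

theorem abs_erf_le (z : ℝ) : |erf z| ≤ 2 / √π * |z| := by
  have hexp : ∀ u ∈ uIoc (0:ℝ) z, ‖exp (-u ^ 2)‖ ≤ 1 := fun u _ => by
    rw [norm_of_nonneg (exp_pos _).le, exp_le_one_iff]
    exact neg_nonpos.2 (sq_nonneg u)
  have hint := intervalIntegral.norm_integral_le_of_norm_le_const hexp
  rw [one_mul, sub_zero] at hint
  rw [erf, abs_mul, abs_of_nonneg (by positivity)]
  exact mul_le_mul_of_nonneg_left hint (by positivity)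

theorem integrableOn_pow_three_mul_exp_neg_mul_sq {b : ℝ} (hb : 0 < b) :
    IntegrableOn (fun x : ℝ => x ^ 3 * exp (-b * x ^ 2)) (Ioi 0) := by
  exact_mod_cast integrableOn_rpow_mul_exp_neg_mul_sq hb (s := 3) (by norm_num)

theorem integral_pow_three_mul_exp_neg_mul_sq {b : ℝ} (hb : 0 < b) :
    ∫ x in Ioi (0:ℝ), x ^ 3 * exp (-b * x ^ 2) = 1 / (2 * b ^ 2) := by
  have h := integral_rpow_mul_exp_neg_mul_rpow (p := 2) (q := 3) two_pos (by norm_num) hb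
  have h3 : ∀ x : ℝ, x ^ (3:ℝ) = x ^ 3 := fun x => by exact_mod_cast rpow_natCast x 3
  simp only [h3, rpow_two] at h
  rw [h]
  norm_num [Gamma_two, rpow_neg hb.le]

noncomputable def erfGaussMoment (a : ℝ) : ℝ :=
  ∫ x in Ioi (0:ℝ), x ^ 2 * erf (a * x / √2) * exp (-x ^ 2 / 2)

theorem hasDerivAt_erfGaussMoment_integrand (x a : ℝ) :
    HasDerivAt (fun a => x ^ 2 * erf (a * x / √2) * exp (-x ^ 2 / 2))
      (√(2 / π) * (x ^ 3 * exp (-((a ^ 2 + 1) / 2) * x ^ 2))) a := by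
  have hlin : HasDerivAt (fun a => a * x / √2) (x / √2) a := by
    simpa using (hasDerivAt_mul_const x).div_const √2
  refine ((((hasDerivAt_erf _).comp a hlin).const_mul (x ^ 2)).mul_const
    (exp (-x ^ 2 / 2))).congr_deriv ?_
  have hexp : exp (-((a ^ 2 + 1) / 2) * x ^ 2) = exp (-(a * x / √2) ^ 2) * exp (-x ^ 2 / 2) := by
    rw [← exp_add, div_pow, sq_sqrt two_pos.le]
    ring_nf
  rw [hexp, sqrt_div' 2 pi_pos.le]
  field_simp
  rw [sq_sqrt two_pos.le]

theorem integrableOn_erfGaussMoment_integrand (a : ℝ) :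
    IntegrableOn (fun x => x ^ 2 * erf (a * x / √2) * exp (-x ^ 2 / 2)) (Ioi 0) := by
  refine ((integrableOn_pow_three_mul_exp_neg_mul_sq (b := 1 / 2) (by norm_num)).const_mul
    (2 / √π * (|a| / √2))).mono' (by fun_prop) ?_
  filter_upwards [ae_restrict_mem measurableSet_Ioi] with x (hx : 0 < x)
  have herf : |erf (a * x / √2)| ≤ 2 / √π * (|a| / √2 * x) := by
    simpa [abs_div, abs_mul, abs_of_pos hx, mul_div_right_comm,
      abs_of_pos (sqrt_pos.2 two_pos)] using abs_erf_le (a * x / √2)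
  rw [norm_mul, norm_mul, norm_of_nonneg (sq_nonneg x), norm_of_nonneg (exp_pos _).le]
  calc x ^ 2 * ‖erf (a * x / √2)‖ * exp (-x ^ 2 / 2)
      ≤ x ^ 2 * (2 / √π * (|a| / √2 * x)) * exp (-x ^ 2 / 2) := by gcongr; exact herf
    _ = 2 / √π * (|a| / √2) * (x ^ 3 * exp (-(1 / 2) * x ^ 2)) := by ring_nf

theorem hasDerivAt_erfGaussMoment (a : ℝ) :
    HasDerivAt erfGaussMoment (√(2 / π) * (2 / (a ^ 2 + 1) ^ 2)) a := by
  have hbound : ∀ᵐ x ∂volume.restrict (Ioi (0:ℝ)), ∀ a' ∈ Metric.ball a 1,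
      ‖√(2 / π) * (x ^ 3 * exp (-((a' ^ 2 + 1) / 2) * x ^ 2))‖ ≤
        √(2 / π) * (x ^ 3 * exp (-(1 / 2) * x ^ 2)) := by
    filter_upwards [ae_restrict_mem measurableSet_Ioi] with x (hx : 0 < x) a' _
    rw [norm_of_nonneg (by positivity)]
    gcongr
    nlinarith [sq_nonneg a', sq_nonneg x, mul_nonneg (sq_nonneg a') (sq_nonneg x)]
  have h := hasDerivAt_integral_of_dominated_loc_of_deriv_le (Metric.ball_mem_nhds a one_pos)
    (Eventually.of_forall fun _ => Continuous.aestronglyMeasurable (by fun_prop))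
    (integrableOn_erfGaussMoment_integrand a).integrable (by fun_prop) hbound
    ((integrableOn_pow_three_mul_exp_neg_mul_sq (by norm_num)).const_mul _)
    (Eventually.of_forall fun x a' _ => hasDerivAt_erfGaussMoment_integrand x a')
  rw [integral_const_mul, integral_pow_three_mul_exp_neg_mul_sq (by positivity)] at h
  refine h.2.congr_deriv ?_
  field_simp

theorem hasDerivAt_div_sq_add_one_add_arctan (a : ℝ) :
    HasDerivAt (fun a => a / (a ^ 2 + 1) + arctan a) (2 / (a ^ 2 + 1) ^ 2) a := by
  have hdiv := (hasDerivAt_id a).div ((hasDerivAt_pow 2 a).add_const 1) (by positivity)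
  refine (hdiv.add (hasDerivAt_arctan a)).congr_deriv ?_
  simp only [id, Nat.cast_ofNat]
  field_simp
  ring

theorem stmt5 (a : ℝ) :
    ∫ x in Ioi (0 : ℝ), x ^ 2 * erf (a * x / Real.sqrt 2) * Real.exp (-x ^ 2 / 2) =
      Real.sqrt (2 / π) * (a / (a ^ 2 + 1) + Real.arctan a) := by
  have hderiv (b : ℝ) : HasDerivAt
      (fun b => erfGaussMoment b - √(2 / π) * (b / (b ^ 2 + 1) + arctan b)) 0 b := by
    simpa using (hasDerivAt_erfGaussMoment b).fun_sub
      ((hasDerivAt_div_sq_add_one_add_arctan b).const_mul √(2 / π))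
  have hconst := is_const_of_deriv_eq_zero (fun b => (hderiv b).differentiableAt)
    (fun b => (hderiv b).deriv) a 0
  simp only [erfGaussMoment, mul_zero, zero_div, erf_zero, zero_mul, integral_zero,
    arctan_zero, add_zero, sub_zero] at hconst
  exact sub_eq_zero.1 hconst
end

section
/- Let 0 < θ < 1 and let c > 0. Then ∫_c^∞ [ h (h − c) / (π θ^{3/2} (1 − θ)^{3/2}) ] · exp( − h²/(2θ) − (h − c)²/(2(1 − θ)) ) dh = (c θ exp(−c²/(2θ))) / (π √(θ(1 − θ))) − ((c² − 1) exp(−c²/2) · erfc( |c| √((1 − θ)/(2θ)) )) / √(2π). (Joint density of the argmax and the close for a positive close.) -/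
open Real MeasureTheory Set

noncomputable def erfc (z : ℝ) : ℝ := 1 - erf z

/-!
Completing the square, `h²/θ + (h - c)²/(1 - θ) = c² + (h - θc)²/(θ(1 - θ))`, turns the density
into `e^{-c²/2}` times a quadratic polynomial in `t = h - θc` against the Gaussian weight
`e^{-at²}`, `a = 1/(2θ(1 - θ))`, to be integrated over `t > (1 - θ)c`. Against this weight, `t` and
`t² - 1/(2a)` have the elementary antiderivatives `-e^{-at²}/(2a)` and `-t e^{-at²}/(2a)`, while
`1` integrates to an `erfc` after the substitution `u = √a t`.
-/

open Filter

section GaussianTail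

variable {a : ℝ}

theorem integral_Ioi_exp_neg_mul_sq (ha : 0 < a) (L : ℝ) :
    ∫ t in Ioi L, exp (-a * t ^ 2) = √(π / a) / 2 * erfc (√a * L) := by
  have hsa : 0 < √a := sqrt_pos.mpr ha
  have hsplit := intervalIntegral.integral_interval_add_Ioi (μ := volume) (a := 0) (b := L)
    (integrable_exp_neg_mul_sq ha).integrableOn (integrable_exp_neg_mul_sq ha).integrableOn
  have hscale : ∫ t in (0 : ℝ)..L, exp (-a * t ^ 2) =
      (√a)⁻¹ * ∫ u in (0 : ℝ)..√a * L, exp (-u ^ 2) := by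
    have := intervalIntegral.integral_comp_mul_left (fun u ↦ exp (-u ^ 2)) (a := 0) (b := L)
      hsa.ne'
    simpa only [mul_zero, mul_pow, sq_sqrt ha.le, smul_eq_mul, neg_mul] using this
  rw [integral_gaussian_Ioi, hscale] at hsplit
  rw [eq_sub_of_add_eq' hsplit, erfc, erf, sqrt_div' _ ha.le]
  field_simp

theorem integral_Ioi_mul_exp_neg_mul_sq (ha : 0 < a) (L : ℝ) :
    ∫ t in Ioi L, t * exp (-a * t ^ 2) = exp (-a * L ^ 2) / (2 * a) := by
  have hderiv (x : ℝ) :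
      HasDerivAt (fun t ↦ -exp (-a * t ^ 2) / (2 * a)) (x * exp (-a * x ^ 2)) x := by
    refine ((((hasDerivAt_pow 2 x).const_mul (-a)).exp.neg).div_const (2 * a)).congr_deriv ?_
    field_simp
    ring
  have hlim : Tendsto (fun t ↦ -exp (-a * t ^ 2) / (2 * a)) atTop (nhds 0) := by
    have := tendsto_exp_atBot.comp
      ((tendsto_pow_atTop two_ne_zero).const_mul_atTop_of_neg (neg_lt_zero.mpr ha))
    simpa using this.neg.div_const (2 * a)
  rw [integral_Ioi_of_hasDerivAt_of_tendsto' (fun x _ ↦ hderiv x)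
    (integrable_mul_exp_neg_mul_sq ha).integrableOn hlim]
  ring

theorem tendsto_mul_exp_neg_mul_sq_atTop (ha : 0 < a) :
    Tendsto (fun x ↦ x * exp (-a * x ^ 2)) atTop (nhds 0) := by
  refine ((tendsto_rpow_abs_mul_exp_neg_mul_sq_cocompact ha 1).mono_left
    atTop_le_cocompact).congr' ?_
  filter_upwards [eventually_ge_atTop 0] with x hx
  rw [rpow_one, abs_of_nonneg hx]

theorem integrable_sq_mul_exp_neg_mul_sq (ha : 0 < a) :
    Integrable fun x : ℝ ↦ x ^ 2 * exp (-a * x ^ 2) := by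
  simpa using integrable_rpow_mul_exp_neg_mul_sq ha (s := 2) (by norm_num)

theorem integral_Ioi_sq_mul_exp_neg_mul_sq (ha : 0 < a) (L : ℝ) :
    ∫ t in Ioi L, t ^ 2 * exp (-a * t ^ 2) =
      (L * exp (-a * L ^ 2) + ∫ t in Ioi L, exp (-a * t ^ 2)) / (2 * a) := by
  have hderiv (x : ℝ) : HasDerivAt (fun t ↦ -(t * exp (-a * t ^ 2)) / (2 * a))
      (x ^ 2 * exp (-a * x ^ 2) - exp (-a * x ^ 2) / (2 * a)) x := by
    refine ((((hasDerivAt_id' x).mul ((hasDerivAt_pow 2 x).const_mul (-a)).exp).neg).div_const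
      (2 * a)).congr_deriv ?_
    field_simp
    ring
  have hint := (integrable_sq_mul_exp_neg_mul_sq ha).sub
    ((integrable_exp_neg_mul_sq ha).div_const (2 * a))
  have hlim := (tendsto_mul_exp_neg_mul_sq_atTop ha).neg.div_const (2 * a)
  rw [neg_zero, zero_div] at hlim
  have := integral_Ioi_of_hasDerivAt_of_tendsto' (fun x (_ : x ∈ Ici L) ↦ hderiv x)
    hint.integrableOn hlim
  rw [integral_sub (integrable_sq_mul_exp_neg_mul_sq ha).integrableOn
    ((integrable_exp_neg_mul_sq ha).div_const _).integrableOn, integral_div] at this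
  rw [sub_eq_iff_eq_add.mp this]
  ring

theorem integral_Ioi_quadratic_mul_exp_neg_mul_sq (ha : 0 < a) (p q L : ℝ) :
    ∫ t in Ioi L, (t ^ 2 + p * t + q) * exp (-a * t ^ 2) =
      (L + p) * exp (-a * L ^ 2) / (2 * a) +
        (1 / (2 * a) + q) * (√(π / a) / 2 * erfc (√a * L)) := by
  have hsplit (t : ℝ) : (t ^ 2 + p * t + q) * exp (-a * t ^ 2) =
      t ^ 2 * exp (-a * t ^ 2) + p * (t * exp (-a * t ^ 2)) + q * exp (-a * t ^ 2) := by ring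
  have h2 := (integrable_sq_mul_exp_neg_mul_sq ha).integrableOn (s := Ioi L)
  have h1 := ((integrable_mul_exp_neg_mul_sq ha).const_mul p).integrableOn (s := Ioi L)
  have h0 := ((integrable_exp_neg_mul_sq ha).const_mul q).integrableOn (s := Ioi L)
  simp_rw [hsplit]
  have h21 : IntegrableOn (fun t ↦ t ^ 2 * exp (-a * t ^ 2) + p * (t * exp (-a * t ^ 2)))
    (Ioi L) := h2.add h1
  rw [integral_add h21 h0, integral_add h2 h1, integral_const_mul,
    integral_const_mul, integral_Ioi_sq_mul_exp_neg_mul_sq ha, integral_Ioi_mul_exp_neg_mul_sq ha,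
    integral_Ioi_exp_neg_mul_sq ha]
  field_simp
  ring

end GaussianTail

theorem setIntegral_Ioi_comp_sub_right {E : Type*} [NormedAddCommGroup E] [NormedSpace ℝ E]
    (f : ℝ → E) (b c : ℝ) : ∫ x in Ioi c, f (x - b) = ∫ t in Ioi (c - b), f t := by
  have := (measurePreserving_sub_right volume b).setIntegral_preimage_emb
    (measurableEmbedding_subRight b) f (Ioi (c - b))
  rwa [preimage_sub_const_Ioi, sub_add_cancel] at this

noncomputable def sheppDensity (θ h c : ℝ) : ℝ :=
  h * (h - c) / (π * θ ^ ((3 : ℝ) / 2) * (1 - θ) ^ ((3 : ℝ) / 2)) *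
    exp (-h ^ 2 / (2 * θ) - (h - c) ^ 2 / (2 * (1 - θ)))

theorem sheppDensity_eq_gaussian {θ : ℝ} (hθ0 : 0 < θ) (hθ1 : θ < 1) (h c : ℝ) :
    sheppDensity θ h c = exp (-c ^ 2 / 2) / (π * (θ * (1 - θ) * √(θ * (1 - θ)))) *
      (((h - θ * c) ^ 2 + (2 * θ - 1) * c * (h - θ * c) + -(θ * (1 - θ) * c ^ 2)) *
        exp (-(1 / (2 * (θ * (1 - θ)))) * (h - θ * c) ^ 2)) := by
  have h1θ : 0 < 1 - θ := sub_pos.mpr hθ1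
  have hexponent : -h ^ 2 / (2 * θ) - (h - c) ^ 2 / (2 * (1 - θ)) =
      -c ^ 2 / 2 + -(1 / (2 * (θ * (1 - θ)))) * (h - θ * c) ^ 2 := by
    field_simp
    ring
  have hdenom : θ ^ ((3 : ℝ) / 2) * (1 - θ) ^ ((3 : ℝ) / 2) = θ * (1 - θ) * √(θ * (1 - θ)) := by
    rw [← mul_rpow hθ0.le h1θ.le, show (3 : ℝ) / 2 = 1 + 1 / 2 by norm_num,
      rpow_add (mul_pos hθ0 h1θ), rpow_one, ← sqrt_eq_rpow]
  rw [sheppDensity, hexponent, exp_add, mul_assoc π, hdenom]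
  ring

theorem integral_Ioi_sheppDensity_eq {θ : ℝ} (hθ0 : 0 < θ) (hθ1 : θ < 1) (c : ℝ) :
    ∫ h in Ioi c, sheppDensity θ h c =
      exp (-c ^ 2 / 2) / (π * (θ * (1 - θ) * √(θ * (1 - θ)))) *
        ∫ t in Ioi ((1 - θ) * c), (t ^ 2 + (2 * θ - 1) * c * t + -(θ * (1 - θ) * c ^ 2)) *
          exp (-(1 / (2 * (θ * (1 - θ)))) * t ^ 2) := by
  simp_rw [sheppDensity_eq_gaussian hθ0 hθ1]
  rw [integral_const_mul, one_sub_mul, setIntegral_Ioi_comp_sub_right (fun t ↦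
    (t ^ 2 + (2 * θ - 1) * c * t + -(θ * (1 - θ) * c ^ 2)) *
      exp (-(1 / (2 * (θ * (1 - θ)))) * t ^ 2))]

theorem stmt15 (θ c : ℝ) (hθ0 : 0 < θ) (hθ1 : θ < 1) (hc : 0 < c) :
    ∫ h in Ioi c,
        h * (h - c) / (π * θ ^ ((3 : ℝ) / 2) * (1 - θ) ^ ((3 : ℝ) / 2)) *
          Real.exp (-h ^ 2 / (2 * θ) - (h - c) ^ 2 / (2 * (1 - θ))) =
      c * θ * Real.exp (-c ^ 2 / (2 * θ)) / (π * Real.sqrt (θ * (1 - θ))) -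
        (c ^ 2 - 1) * Real.exp (-c ^ 2 / 2) *
            erfc (|c| * Real.sqrt ((1 - θ) / (2 * θ))) / Real.sqrt (2 * π) := by
  change ∫ h in Ioi c, sheppDensity θ h c = _
  rw [integral_Ioi_sheppDensity_eq hθ0 hθ1]
  have h1θ : 0 < 1 - θ := sub_pos.mpr hθ1
  set s := θ * (1 - θ) with hs_def
  have hs : 0 < s := mul_pos hθ0 h1θ
  have ha : 0 < 1 / (2 * s) := by positivity
  have hsqrt : √(π / (1 / (2 * s))) = √(2 * π) * √s := by
    rw [← sqrt_mul (by positivity)]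
    congr 1
    field_simp
  have harg : √(1 / (2 * s)) * ((1 - θ) * c) = |c| * √((1 - θ) / (2 * θ)) := by
    rw [← sq_eq_sq₀ (by positivity) (by positivity)]
    simp only [mul_pow, sq_abs]
    rw [sq_sqrt ha.le, sq_sqrt (by positivity), hs_def]
    field_simp
  have hexp : exp (-c ^ 2 / (2 * θ)) =
      exp (-c ^ 2 / 2) * exp (-(1 / (2 * s)) * ((1 - θ) * c) ^ 2) := by
    rw [← exp_add]
    congr 1
    field_simp
    ring
  rw [integral_Ioi_quadratic_mul_exp_neg_mul_sq ha, hsqrt, harg, hexp]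
  field_simp
  linear_combination √s * (1 - c ^ 2) * erfc (|c| * √((1 - θ) / (2 * θ))) *
    sq_sqrt (show 0 ≤ 2 * π by positivity)
end
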